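/- If x is an element of T = ℤ[p,p⁻¹,q,q⁻¹]/((p−1)(p−q),(q−1)(p−q)) with ε(x) ≠ 0, where ε : T → ℤ is the ring homomorphism determined by ε(p) = ε(q) = 1, then x is a regular element of T: for all y, z ∈ T, x·y = x·z implies y = z (equivalently, x is not a zero divisor). -/

import Mathlib

/-!  The ring `T = ℤ[p,p⁻¹,q,q⁻¹] / ((p−1)(p−q), (q−1)(p−q))`.

We realize the two-variable Laurent polynomial ring `ℤ[p,p⁻¹,q,q⁻¹]` as the
iterated Laurent polynomial ring `(ℤ[T;T⁻¹])[T;T⁻¹]`, where the inner variable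
is `p` and the outer variable is `q`.  -/

noncomputable section

/-- The two-variable Laurent polynomial ring `ℤ[p,p⁻¹,q,q⁻¹]`. -/
abbrev L : Type := LaurentPolynomial (LaurentPolynomial ℤ)

/-- The variable `p` (the inner variable). -/
def pL : L := LaurentPolynomial.C (LaurentPolynomial.T 1)

/-- The variable `q` (the outer variable). -/
def qL : L := LaurentPolynomial.T 1

/-- The defining ideal `((p−1)(p−q), (q−1)(p−q))`. -/
def idealI : Ideal L := Ideal.span {(pL - 1) * (pL - qL), (qL - 1) * (pL - qL)}

/-- The ring `T = ℤ[p,p⁻¹,q,q⁻¹] / ((p−1)(p−q), (q−1)(p−q))`. -/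
abbrev TT : Type := L ⧸ idealI

/-- The image of `p` in `T`. -/
def pT : TT := Ideal.Quotient.mk idealI pL

/-- The image of `q` in `T`. -/
def qT : TT := Ideal.Quotient.mk idealI qL

/-! Write `δ` for the image of `p - q`. Sending `p, q ↦ t` maps `T` to the domain `ℤ[t,t⁻¹]`
with kernel `(δ)`, and `ε` factors through it. Since `I = (p - 1, q - 1)(p - q)` and
`(p - 1, q - 1)` is the kernel of evaluation at `p = q = 1`, each `c` acts on `δ` as the integer
`ε c`; and `δ` has infinite additive order, since `p ↦ 1 + e`, `q ↦ 1` sends it to the dual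
number `e`. So if `x * w = 0` with `ε x ≠ 0`, then `w` dies in `ℤ[t,t⁻¹]`, hence
`w = c * δ = ε c • δ`, and `0 = x * w = (ε x * ε c) • δ` forces `ε c = 0`. -/

open LaurentPolynomial

theorem LaurentPolynomial.ringHom_ext {R S : Type*} [CommSemiring R] [Semiring S]
    {f g : R[T;T⁻¹] →+* S} (hC : f.comp C = g.comp C) (hT : f (T 1) = g (T 1)) : f = g :=
  IsLocalization.ringHom_ext (Submonoid.powers (Polynomial.X : Polynomial R)) <|
    Polynomial.ringHom_ext (fun r => by simpa using RingHom.congr_fun hC r) (by simpa using hT)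

theorem L.ringHom_ext {B : Type*} [Semiring B] {f g : L →+* B}
    (hp : f pL = g pL) (hq : f qL = g qL) : f = g :=
  LaurentPolynomial.ringHom_ext (LaurentPolynomial.ringHom_ext (RingHom.ext_int _ _) hp) hq

def L.eval {B : Type*} [CommRing B] (u v : Bˣ) : L →+* B :=
  eval₂ (eval₂ (Int.castRingHom B) u) v

@[simp] theorem L.eval_pL {B : Type*} [CommRing B] (u v : Bˣ) : L.eval u v pL = u := by
  simp [L.eval, pL]

@[simp] theorem L.eval_qL {B : Type*} [CommRing B] (u v : Bˣ) : L.eval u v qL = v := by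
  simp [L.eval, qL]

theorem L.isUnit_qL : IsUnit qL := isUnit_T 1

def L.toDiagonal : L →+* ℤ[T;T⁻¹] := L.eval (isUnit_T 1).unit (isUnit_T 1).unit

@[simp] theorem L.toDiagonal_pL : L.toDiagonal pL = T 1 := by simp [L.toDiagonal]

@[simp] theorem L.toDiagonal_qL : L.toDiagonal qL = T 1 := by simp [L.toDiagonal]

theorem L.eval₂_comp_toDiagonal {B : Type*} [CommRing B] (g : L →+* B) (hg : g pL = g qL) :
    (eval₂ (Int.castRingHom B) (L.isUnit_qL.map g).unit).comp L.toDiagonal = g :=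
  L.ringHom_ext (by simp [hg]) (by simp)

theorem L.mem_span_of_toDiagonal_eq_zero {a : L} (ha : L.toDiagonal a = 0) :
    a ∈ Ideal.span {pL - qL} := by
  have hpq : Ideal.Quotient.mk (Ideal.span {pL - qL}) pL = Ideal.Quotient.mk _ qL :=
    Ideal.Quotient.eq.mpr (Ideal.subset_span rfl)
  have := RingHom.congr_fun (L.eval₂_comp_toDiagonal (B := L ⧸ Ideal.span {pL - qL}) _ hpq) a
  rw [RingHom.comp_apply, ha, map_zero] at this
  exact Ideal.Quotient.eq_zero_iff_mem.mp this.symm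

theorem L.intCast_comp_eval_one {B : Type*} [Ring B] (g : L →+* B) (hp : g pL = 1)
    (hq : g qL = 1) : (Int.castRingHom B).comp (L.eval 1 1) = g :=
  L.ringHom_ext (by simp [hp]) (by simp [hq])

theorem L.ker_eval_one_le : RingHom.ker (L.eval (1 : ℤˣ) 1) ≤ Ideal.span {pL - 1, qL - 1} := by
  intro a ha
  set K := Ideal.span {pL - 1, qL - 1}
  have hp : Ideal.Quotient.mk K pL = 1 := Ideal.Quotient.eq.mpr (Ideal.subset_span (Or.inl rfl))
  have hq : Ideal.Quotient.mk K qL = 1 := Ideal.Quotient.eq.mpr (Ideal.subset_span (Or.inr rfl))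
  have := RingHom.congr_fun (L.intCast_comp_eval_one (B := L ⧸ K) _ hp hq) a
  rw [RingHom.comp_apply, RingHom.mem_ker.mp ha, map_zero] at this
  exact Ideal.Quotient.eq_zero_iff_mem.mp this.symm

theorem idealI_eq_mul : idealI = Ideal.span {pL - 1, qL - 1} * Ideal.span {pL - qL} := by
  rw [idealI, Ideal.span_mul_span']
  simp [Set.image_insert_eq]

theorem L.idealI_le_ker_eval {B : Type*} [CommRing B] (u v : Bˣ)
    (hu : ((u : B) - 1) * (u - v) = 0) (hv : ((v : B) - 1) * (u - v) = 0) :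
    idealI ≤ RingHom.ker (L.eval u v) :=
  Ideal.span_le.mpr <| by rintro _ (rfl | rfl) <;> simpa

theorem TT.ringHom_ext {B : Type*} [Semiring B] {f g : TT →+* B}
    (hp : f pT = g pT) (hq : f qT = g qT) : f = g :=
  Ideal.Quotient.ringHom_ext (L.ringHom_ext hp hq)

def TT.lift {B : Type*} [CommRing B] (u v : Bˣ) (hu : ((u : B) - 1) * (u - v) = 0)
    (hv : ((v : B) - 1) * (u - v) = 0) : TT →+* B :=
  Ideal.Quotient.lift idealI (L.eval u v) fun _ ha =>
    RingHom.mem_ker.mp (L.idealI_le_ker_eval u v hu hv ha)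

@[simp] theorem TT.lift_pT {B : Type*} [CommRing B] (u v : Bˣ)
    (hu : ((u : B) - 1) * (u - v) = 0) (hv : ((v : B) - 1) * (u - v) = 0) :
    TT.lift u v hu hv pT = u := by
  rw [TT.lift, pT, Ideal.Quotient.lift_mk, L.eval_pL]

@[simp] theorem TT.lift_qT {B : Type*} [CommRing B] (u v : Bˣ)
    (hu : ((u : B) - 1) * (u - v) = 0) (hv : ((v : B) - 1) * (u - v) = 0) :
    TT.lift u v hu hv qT = v := by
  rw [TT.lift, qT, Ideal.Quotient.lift_mk, L.eval_qL]

def TT.delta : TT := pT - qT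

def TT.toDualNumber : TT →+* DualNumber ℤ :=
  TT.lift
    (TrivSqZeroExt.isUnit_iff_isUnit_fst.mpr (by simp) :
      IsUnit (1 + DualNumber.eps : DualNumber ℤ)).unit 1
    (by simp [DualNumber.eps_mul_eps]) (by simp)

theorem TT.toDualNumber_delta : TT.toDualNumber TT.delta = DualNumber.eps := by
  simp [TT.toDualNumber, TT.delta]

theorem TT.eq_zero_of_zsmul_delta_eq_zero {n : ℤ} (h : n • TT.delta = 0) : n = 0 := by
  simpa [TT.toDualNumber_delta] using congrArg (fun a => (TT.toDualNumber a).snd) h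

theorem TT.mul_delta_eq_zsmul (ε : TT →+* ℤ) (hp : ε pT = 1) (hq : ε qT = 1) (c : TT) :
    c * TT.delta = ε c • TT.delta := by
  obtain ⟨a, rfl⟩ := Ideal.Quotient.mk_surjective c
  set n := ε (Ideal.Quotient.mk idealI a)
  have hn : L.eval 1 1 a = n :=
    RingHom.congr_fun (L.intCast_comp_eval_one (ε.comp (Ideal.Quotient.mk idealI)) hp hq) a
  have hK : a - n ∈ Ideal.span {pL - 1, qL - 1} := L.ker_eval_one_le (by simp [hn])
  have hI : a * (pL - qL) - n • (pL - qL) ∈ idealI := by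
    rw [zsmul_eq_mul, ← sub_mul, idealI_eq_mul]
    exact Ideal.mul_mem_mul hK (Ideal.mem_span_singleton_self _)
  have := Ideal.Quotient.eq_zero_iff_mem.mpr hI
  rwa [map_sub, map_zsmul, map_mul, sub_eq_zero] at this

def TT.toDiagonal : TT →+* ℤ[T;T⁻¹] :=
  TT.lift (isUnit_T 1).unit (isUnit_T 1).unit (by simp) (by simp)

@[simp] theorem TT.toDiagonal_pT : TT.toDiagonal pT = T 1 := by simp [TT.toDiagonal]

@[simp] theorem TT.toDiagonal_qT : TT.toDiagonal qT = T 1 := by simp [TT.toDiagonal]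

theorem TT.eval₂_comp_toDiagonal (ε : TT →+* ℤ) (hp : ε pT = 1) (hq : ε qT = 1) :
    (eval₂ (RingHom.id ℤ) 1).comp TT.toDiagonal = ε :=
  TT.ringHom_ext (by simp [hp]) (by simp [hq])

theorem TT.exists_mul_delta_eq_of_toDiagonal_eq_zero {w : TT} (hw : TT.toDiagonal w = 0) :
    ∃ c, c * TT.delta = w := by
  obtain ⟨a, rfl⟩ := Ideal.Quotient.mk_surjective w
  obtain ⟨b, rfl⟩ := Ideal.mem_span_singleton'.mp (L.mem_span_of_toDiagonal_eq_zero hw)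
  exact ⟨Ideal.Quotient.mk idealI b, (map_mul _ _ _).symm⟩

/-- If `x ∈ T` satisfies `ε x ≠ 0`, where `ε : T → ℤ` is the ring
homomorphism determined by `ε p = ε q = 1`, then `x` is a regular element:
`x * y = x * z` implies `y = z`. -/
theorem regular_of_eval_ne_zero
    (ε : TT →+* ℤ) (hp : ε pT = 1) (hq : ε qT = 1) (x : TT) (hx : ε x ≠ 0) :
    ∀ y z : TT, x * y = x * z → y = z := by
  intro y z hxyz
  have hxw : x * (y - z) = 0 := by linear_combination hxyz
  have hx' : TT.toDiagonal x ≠ 0 := fun h => hx <| by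
    rw [← TT.eval₂_comp_toDiagonal ε hp hq, RingHom.comp_apply, h, map_zero]
  have hw : TT.toDiagonal (y - z) = 0 :=
    (mul_eq_zero.mp (by rw [← map_mul, hxw, map_zero])).resolve_left hx'
  obtain ⟨c, hc⟩ := TT.exists_mul_delta_eq_of_toDiagonal_eq_zero hw
  have hεc : ε c = 0 := by
    refine (mul_eq_zero.mp (TT.eq_zero_of_zsmul_delta_eq_zero ?_)).resolve_left hx
    calc (ε x * ε c) • TT.delta = ε x • (c * TT.delta) := by
          rw [mul_smul, TT.mul_delta_eq_zsmul ε hp hq c]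
      _ = c * (x * TT.delta) := by rw [TT.mul_delta_eq_zsmul ε hp hq x, mul_smul_comm]
      _ = x * (y - z) := by rw [← hc]; ring
      _ = 0 := hxw
  rw [← sub_eq_zero, ← hc, TT.mul_delta_eq_zsmul ε hp hq, hεc, zero_smul]
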